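/- The set of integer points (x,y,z) ∈ ℤ³ satisfying 2x² + 2y² + 2z² + xy + 2xz + 2yz − 4x − 3y − 4z + 2 ≤ 0 is exactly {(1,0,0), (1,1,0), (0,0,1), (1,0,1)}, and the left-hand side vanishes at each of these four points. (These four points are the vertices of the tetrahedron T³_{(0,0,0)}.) -/

import Mathlib

/-!
Completing squares at the centre `(2/3, 1/3, 1/2)` of the ellipsoid, the quadric `q` satisfies
`6 q = (3x - 2)² + (3y - 1)² + 3 (x + y + 2z - 2)² - 5`.
Hence `q > -1` everywhere, so an integer point of `Q₃` lies on its boundary; and `q ≤ 0` forces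
`(3x - 2)² ≤ 5`, `(3y - 1)² ≤ 5` and `(x + y + 2z - 2)² ≤ 1`, which leaves only the four vertices.
-/

def ellipsoidQ3 {R : Type*} [CommRing R] (x y z : R) : R :=
  2 * x ^ 2 + 2 * y ^ 2 + 2 * z ^ 2 + x * y + 2 * x * z + 2 * y * z - 4 * x - 3 * y - 4 * z + 2

theorem six_mul_ellipsoidQ3 {R : Type*} [CommRing R] (x y z : R) :
    6 * ellipsoidQ3 x y z = (3 * x - 2) ^ 2 + (3 * y - 1) ^ 2 + 3 * (x + y + 2 * z - 2) ^ 2 - 5 := by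
  unfold ellipsoidQ3
  ring

theorem ellipsoidQ3_int_nonneg (x y z : ℤ) : 0 ≤ ellipsoidQ3 x y z := by
  have h := six_mul_ellipsoidQ3 x y z
  nlinarith [sq_nonneg (3 * x - 2), sq_nonneg (3 * y - 1), sq_nonneg (x + y + 2 * z - 2)]

theorem ellipsoidQ3_int_nonpos_iff (v : ℤ × ℤ × ℤ) :
    ellipsoidQ3 v.1 v.2.1 v.2.2 ≤ 0 ↔
      v ∈ ({(1,0,0), (1,1,0), (0,0,1), (1,0,1)} : Set (ℤ × ℤ × ℤ)) := by
  obtain ⟨x, y, z⟩ := v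
  simp only [Set.mem_insert_iff, Set.mem_singleton_iff, Prod.mk.injEq]
  constructor
  · intro h
    have hsum : (3 * x - 2) ^ 2 + (3 * y - 1) ^ 2 + 3 * (x + y + 2 * z - 2) ^ 2 ≤ 5 := by
      linarith [six_mul_ellipsoidQ3 x y z]
    have hx : (3 * x - 2) ^ 2 ≤ 5 := by nlinarith [sq_nonneg (3 * y - 1), sq_nonneg (x + y + 2 * z - 2)]
    have hy : (3 * y - 1) ^ 2 ≤ 5 := by nlinarith [sq_nonneg (3 * x - 2), sq_nonneg (x + y + 2 * z - 2)]
    have hw : (x + y + 2 * z - 2) ^ 2 ≤ 1 := by nlinarith [sq_nonneg (3 * x - 2), sq_nonneg (3 * y - 1)]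
    obtain ⟨hx0, hx1⟩ : 0 ≤ x ∧ x ≤ 1 := by constructor <;> nlinarith
    obtain ⟨hy0, hy1⟩ : 0 ≤ y ∧ y ≤ 1 := by constructor <;> nlinarith
    obtain ⟨hz0, hz1⟩ : 0 ≤ z ∧ z ≤ 1 := by
      have := abs_le.mp ((sq_le_one_iff_abs_le_one _).mp hw)
      omega
    interval_cases x <;> interval_cases y <;> interval_cases z <;> omega
  · rintro (⟨rfl, rfl, rfl⟩ | ⟨rfl, rfl, rfl⟩ | ⟨rfl, rfl, rfl⟩ | ⟨rfl, rfl, rfl⟩) <;> decide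

theorem lattice_points_of_ellipsoid_Q3 :
    {v : ℤ × ℤ × ℤ | 2 * v.1 ^ 2 + 2 * v.2.1 ^ 2 + 2 * v.2.2 ^ 2 + v.1 * v.2.1 + 2 * v.1 * v.2.2 + 2 * v.2.1 * v.2.2 - 4 * v.1 - 3 * v.2.1 - 4 * v.2.2 + 2 ≤ 0} =
      ({(1,0,0), (1,1,0), (0,0,1), (1,0,1)} : Set (ℤ × ℤ × ℤ)) ∧
    ∀ v ∈ ({(1,0,0), (1,1,0), (0,0,1), (1,0,1)} : Set (ℤ × ℤ × ℤ)),
      2 * v.1 ^ 2 + 2 * v.2.1 ^ 2 + 2 * v.2.2 ^ 2 + v.1 * v.2.1 + 2 * v.1 * v.2.2 + 2 * v.2.1 * v.2.2 - 4 * v.1 - 3 * v.2.1 - 4 * v.2.2 + 2 = 0 := by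
  refine ⟨Set.ext ellipsoidQ3_int_nonpos_iff, fun v hv => ?_⟩
  exact le_antisymm ((ellipsoidQ3_int_nonpos_iff v).mpr hv) (ellipsoidQ3_int_nonneg _ _ _)
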